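/- (Proposition 1) Suppose q* ∈ (0,1) with τ* := τ(q*) > 0 satisfies the balance condition s_n(τ*)/s_a(τ*) = E[s_n]/E[s_a] (equivalently, s_n(τ*)·E[s_a] = s_a(τ*)·E[s_n] with s_a(τ*) > 0), and suppose additionally that s_n'(τ*) < 0 < s_a'(τ*) and S(τ*) > 0. Then the robustness function R(q) = (∫₀^{τ(q)} x·s_n(x) dx)/E[s_n] − (∫₀^{τ(q)} x·s_a(x) dx)/E[s_a] has a local maximum at q = q*: there exists ε > 0 such that R(q) ≤ R(q*) for all q ∈ (0,1) with |q − q*| < ε. -/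

import Mathlib

open MeasureTheory Set Filter Topology

/-!
Set `f := s_n / E[s_n] - s_a / E[s_a]`. Along the thresholds, `R = G ∘ τ` with
`G t = ∫₀ᵗ x f(x) dx`, so `G' t = t f(t)`. The balance condition says `f(τ*) = 0`, and
`s_n'(τ*) < 0 < s_a'(τ*)` gives `f'(τ*) < 0`; hence `f`, and with it `G'` (as `τ* > 0`), changes
sign from `+` to `-` at `τ*`, so `G` has a local maximum there by the first derivative test.
Continuity of `τ` at `q*` transfers it to `R`.
-/

theorem isLocalMax_of_hasDerivAt_mul_of_deriv_neg {G w f : ℝ → ℝ} {c : ℝ}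
    (hG : ∀ᶠ t in 𝓝 c, HasDerivAt G (w t * f t) t) (hw : ContinuousAt w c) (hwc : 0 < w c)
    (hfc : f c = 0) (hf' : deriv f c < 0) : IsLocalMax G c := by
  refine isLocalMax_of_sign_deriv hG.self_of_nhds.continuousAt (nhdsWithin_le_nhds ?_)
  filter_upwards [hG, hw.eventually (lt_mem_nhds hwc),
    eventually_nhdsWithin_sign_eq_of_deriv_neg hf' hfc] with t hGt hwt hft
  rw [hGt.deriv, sign_mul, hft, sign_pos hwt, one_mul]

theorem hasDerivAt_integral_id_mul_div_sub {g h : ℝ → ℝ} (hg : Continuous g) (hh : Continuous h)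
    (a c d t : ℝ) :
    HasDerivAt (fun u => (∫ x in a..u, x * g x) / c - (∫ x in a..u, x * h x) / d)
      (t * (g t / c - h t / d)) t := by
  have hFg : HasDerivAt (fun u => ∫ x in a..u, x * g x) (t * g t) t :=
    ((continuous_id.mul hg).integral_hasStrictDerivAt a t).hasDerivAt
  have hFh : HasDerivAt (fun u => ∫ x in a..u, x * h x) (t * h t) t :=
    ((continuous_id.mul hh).integral_hasStrictDerivAt a t).hasDerivAt
  exact ((hFg.div_const c).fun_sub (hFh.div_const d)).congr_deriv (by ring)

theorem robustness_localMax_general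
    (s_n s_a : ℝ → ℝ)
    (hsn_smooth : ContDiff ℝ 1 s_n) (hsa_smooth : ContDiff ℝ 1 s_a)
    (S : ℝ → ℝ)
    (τ : ℝ → ℝ)
    (hτ' : ∀ q ∈ Set.Ioo (0 : ℝ) 1, HasDerivAt τ (1 / S (τ q)) q)
    (En Ea : ℝ)
    (hEn_pos : 0 < En) (hEa_pos : 0 < Ea)
    (R : ℝ → ℝ)
    (hR : ∀ q, R q = (∫ x in (0 : ℝ)..(τ q), x * s_n x) / En
        - (∫ x in (0 : ℝ)..(τ q), x * s_a x) / Ea)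
    (qstar : ℝ) (hqstar : qstar ∈ Set.Ioo (0 : ℝ) 1)
    (τstar : ℝ) (hτstar : τstar = τ qstar)
    (hτstar_pos : 0 < τstar)
    (hbalance : s_n τstar * Ea = s_a τstar * En)
    (hsn' : deriv s_n τstar < 0) (hsa' : 0 < deriv s_a τstar) :
    ∃ ε > 0, ∀ q ∈ Set.Ioo (0 : ℝ) 1, |q - qstar| < ε → R q ≤ R qstar := by
  set f : ℝ → ℝ := fun x => s_n x / En - s_a x / Ea
  have hf_root : f τstar = 0 := by
    simp only [f, sub_eq_zero, div_eq_div_iff hEn_pos.ne' hEa_pos.ne', hbalance]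
  have hf_deriv : deriv f τstar < 0 := by
    have hn := (hsn_smooth.differentiable one_ne_zero τstar).hasDerivAt
    have ha := (hsa_smooth.differentiable one_ne_zero τstar).hasDerivAt
    have hf : HasDerivAt f (deriv s_n τstar / En - deriv s_a τstar / Ea) τstar :=
      (hn.div_const En).sub (ha.div_const Ea)
    rw [hf.deriv]
    linarith [div_neg_of_neg_of_pos hsn' hEn_pos, div_pos hsa' hEa_pos]
  have hG_max := isLocalMax_of_hasDerivAt_mul_of_deriv_neg (w := id) (f := f)
    (.of_forall (hasDerivAt_integral_id_mul_div_sub hsn_smooth.continuous hsa_smooth.continuous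
      0 En Ea)) continuousAt_id hτstar_pos hf_root hf_deriv
  rw [hτstar] at hG_max
  have hR_max : IsLocalMax R qstar := by
    rw [funext hR]
    exact hG_max.comp_continuous (hτ' qstar hqstar).continuousAt
  obtain ⟨ε, hε, hball⟩ := Metric.eventually_nhds_iff.mp hR_max
  exact ⟨ε, hε, fun q _ hq => hball (by rwa [Real.dist_eq])⟩

/-- **Proposition 1.** Suppose `q* ∈ (0,1)` with `τ* := τ q* > 0` satisfies
the balance condition `s_n τ* * Ea = s_a τ* * En` (with `s_a τ* > 0`), and suppose
additionally that `s_n' τ* < 0 < s_a' τ*` and `S τ* > 0`.  Then the robustness function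
`R q = (∫ x in 0..τ q, x * s_n x) / En - (∫ x in 0..τ q, x * s_a x) / Ea` has a local
maximum at `q = q*`: there exists `ε > 0` such that `R q ≤ R q*` for all `q ∈ (0,1)` with
`|q - q*| < ε`. -/
theorem robustness_localMax
    (s_n s_a : ℝ → ℝ) (α : ℝ) (hα : α ∈ Set.Ioo (0 : ℝ) 1)
    (hsn_smooth : ContDiff ℝ 1 s_n) (hsa_smooth : ContDiff ℝ 1 s_a)
    (hsn_nonneg : ∀ x, 0 ≤ s_n x) (hsa_nonneg : ∀ x, 0 ≤ s_a x)
    (hsn_supp : ∀ x < (0 : ℝ), s_n x = 0) (hsa_supp : ∀ x < (0 : ℝ), s_a x = 0)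
    (hsn_int : Integrable s_n) (hsa_int : Integrable s_a)
    (hsn_pdf : ∫ x, s_n x = 1) (hsa_pdf : ∫ x, s_a x = 1)
    (S : ℝ → ℝ) (hS : ∀ x, S x = α * s_n x + (1 - α) * s_a x)
    (hS_pos : ∀ x > (0 : ℝ), 0 < S x)
    (τ : ℝ → ℝ)
    (hτ : ∀ q ∈ Set.Ioo (0 : ℝ) 1, ∫ x in (0 : ℝ)..(τ q), S x = q)
    (hτ' : ∀ q ∈ Set.Ioo (0 : ℝ) 1, HasDerivAt τ (1 / S (τ q)) q)
    (En Ea : ℝ)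
    (hEn : En = ∫ x in Set.Ioi (0 : ℝ), x * s_n x)
    (hEa : Ea = ∫ x in Set.Ioi (0 : ℝ), x * s_a x)
    (hEn_fin : IntegrableOn (fun x => x * s_n x) (Set.Ioi (0 : ℝ)))
    (hEa_fin : IntegrableOn (fun x => x * s_a x) (Set.Ioi (0 : ℝ)))
    (hEn_pos : 0 < En) (hEa_pos : 0 < Ea)
    (R : ℝ → ℝ)
    (hR : ∀ q, R q = (∫ x in (0 : ℝ)..(τ q), x * s_n x) / En
        - (∫ x in (0 : ℝ)..(τ q), x * s_a x) / Ea)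
    (qstar : ℝ) (hqstar : qstar ∈ Set.Ioo (0 : ℝ) 1)
    (τstar : ℝ) (hτstar : τstar = τ qstar)
    (hτstar_pos : 0 < τstar) (hSτstar_pos : 0 < S τstar)
    (hsa_τstar_pos : 0 < s_a τstar)
    (hbalance : s_n τstar * Ea = s_a τstar * En)
    (hsn' : deriv s_n τstar < 0) (hsa' : 0 < deriv s_a τstar) :
    ∃ ε > 0, ∀ q ∈ Set.Ioo (0 : ℝ) 1, |q - qstar| < ε → R q ≤ R qstar :=
  robustness_localMax_general s_n s_a hsn_smooth hsa_smooth S τ hτ' En Ea hEn_pos hEa_pos R hR qstar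
    hqstar τstar hτstar hτstar_pos hbalance hsn' hsa'
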